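/- Ranked Pairs respects initial segments: let σ be the Ranked Pairs output on votes (σ_1,...,σ_n) over a finite set V, and let V' ⊆ V be the set of transactions in some initial segment of σ. If each vote is restricted to V' and Ranked Pairs is run on the restricted votes (with a consistent tie-breaking order on edges), the resulting output equals the restriction of σ to V', i.e., σ extends the output on the restricted input. -/

import Mathlib

/-- The fraction of the `n` voters (each voter `i` ranking transactions by the
injective rank function `rank i`) that rank `a` before `b`. -/
def voteWeight {V : Type*} (n : ℕ) (rank : Fin n → V → ℕ) (a b : V) : ℚ :=
  ((Finset.univ.filter (fun i : Fin n => rank i a < rank i b)).card : ℚ) / n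

/-- A set `H` of directed edges has a directed cycle. -/
def hasCycle {V : Type*} (H : Set (V × V)) : Prop :=
  ∃ v : V, Relation.TransGen (fun a b : V => (a, b) ∈ H) v v

/-- The greedy (Ranked Pairs) edge-selection process: iterate over the list of
edges, adding each edge to the accumulated set `H` unless doing so would create a
directed cycle in `H`. -/
noncomputable def greedy {V : Type*} : List (V × V) → Set (V × V) → Set (V × V)
  | [], H => H
  | e :: rest, H =>
      greedy rest
        (@ite _ (hasCycle (insert e H)) (Classical.propDecidable _) H (insert e H))

/-!
Let `S = V' × V'`. By induction along the edge list, running the greedy process on the edges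
of `S` produces exactly the accepted edges lying in `S`. The only point is an edge `(a, b) ∈ S`
rejected by the full run: the accepted edges contain a path from `b` to `a`, and since `V'` is
closed under predecessors of accepted edges, that whole path lies in `S`, so the restricted run
rejects `(a, b)` as well.
-/

open Relation

namespace List

theorem Sublist.eq_filter_of_mem_iff {α : Type*} {l l' : List α} {p : α → Bool}
    (hsub : l' <+ l) (hnd : l.Nodup) (hmem : ∀ x, x ∈ l' ↔ x ∈ l ∧ p x) :
    l' = l.filter p := by
  have hl' : l' <+ l.filter p := by
    simpa [filter_eq_self.mpr fun x hx => ((hmem x).1 hx).2] using hsub.filter p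
  refine hl'.eq_of_length_le ((hnd.filter p).length_le_of_subset fun x hx => ?_)
  rw [mem_filter] at hx
  exact (hmem x).2 hx

end List

section RankedPairs

variable {V : Type*}

abbrev edgeRel (H : Set (V × V)) (a b : V) : Prop := (a, b) ∈ H

theorem hasCycle_mono {H K : Set (V × V)} (h : H ⊆ K) : hasCycle H → hasCycle K :=
  fun ⟨v, hv⟩ => ⟨v, TransGen.mono (fun _ _ hab => h hab) _ _ hv⟩

theorem not_hasCycle_empty : ¬ hasCycle (∅ : Set (V × V)) := by
  rintro ⟨v, hv⟩
  obtain ⟨_, h, -⟩ := TransGen.head'_iff.mp hv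
  exact h

theorem transGen_insert {H : Set (V × V)} {a b x y : V}
    (h : TransGen (edgeRel (insert (a, b) H)) x y) :
    TransGen (edgeRel H) x y ∨
      ReflTransGen (edgeRel H) x a ∧ ReflTransGen (edgeRel H) b y := by
  induction h with
  | single hxy =>
    rcases hxy with hxy | hxy
    · obtain ⟨rfl, rfl⟩ := Prod.mk.inj hxy
      exact .inr ⟨.refl, .refl⟩
    · exact .inl (.single hxy)
  | tail _ hzy ih =>
    rcases hzy with hzy | hzy
    · obtain ⟨rfl, rfl⟩ := Prod.mk.inj hzy
      exact .inr ⟨ih.elim TransGen.to_reflTransGen And.left, .refl⟩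
    · exact ih.imp (·.tail hzy) fun ⟨hxa, hbz⟩ => ⟨hxa, hbz.tail hzy⟩

theorem reflTransGen_of_hasCycle_insert {H : Set (V × V)} {a b : V}
    (hH : ¬ hasCycle H) (hc : hasCycle (insert (a, b) H)) :
    ReflTransGen (edgeRel H) b a := by
  obtain ⟨v, hv⟩ := hc
  rcases transGen_insert hv with hvv | ⟨hva, hbv⟩
  · exact absurd ⟨v, hvv⟩ hH
  · exact hbv.trans hva

theorem hasCycle_insert_of_reflTransGen {H : Set (V × V)} {a b : V}
    (hba : ReflTransGen (edgeRel H) b a) : hasCycle (insert (a, b) H) :=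
  ⟨a, .head' (Set.mem_insert _ _)
    (ReflTransGen.mono (fun _ _ => Set.mem_insert_of_mem _) _ _ hba)⟩

theorem reflTransGen_inter_prod {V' : Set V} {H : Set (V × V)}
    (hdown : ∀ a b : V, b ∈ V' → (a, b) ∈ H → a ∈ V') {a b : V} (ha : a ∈ V')
    (hba : ReflTransGen (edgeRel H) b a) :
    ReflTransGen (edgeRel (H ∩ V' ×ˢ V')) b a := by
  suffices b ∈ V' ∧ ReflTransGen (edgeRel (H ∩ V' ×ˢ V')) b a from this.2
  induction hba using ReflTransGen.head_induction_on with
  | refl => exact ⟨ha, .refl⟩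
  | head hcd _ ih =>
    have hc := hdown _ _ ih.1 hcd
    exact ⟨hc, .head ⟨hcd, hc, ih.1⟩ ih.2⟩

theorem hasCycle_insert_inter_prod_iff {V' : Set V} {H : Set (V × V)} {e : V × V}
    (he : e ∈ V' ×ˢ V') (hH : ¬ hasCycle H)
    (hdown : ∀ a b : V, b ∈ V' → (a, b) ∈ H → a ∈ V') :
    hasCycle (insert e (H ∩ V' ×ˢ V')) ↔ hasCycle (insert e H) := by
  refine ⟨hasCycle_mono (Set.insert_subset_insert Set.inter_subset_left), fun hc => ?_⟩
  exact hasCycle_insert_of_reflTransGen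
    (reflTransGen_inter_prod hdown he.1 (reflTransGen_of_hasCycle_insert hH hc))

theorem greedy_cons_of_hasCycle {e : V × V} {L : List (V × V)} {H : Set (V × V)}
    (hc : hasCycle (insert e H)) : greedy (e :: L) H = greedy L H := by
  simp [greedy, hc]

theorem greedy_cons_of_not_hasCycle {e : V × V} {L : List (V × V)} {H : Set (V × V)}
    (hc : ¬ hasCycle (insert e H)) : greedy (e :: L) H = greedy L (insert e H) := by
  simp [greedy, hc]

theorem subset_greedy (L : List (V × V)) (H : Set (V × V)) : H ⊆ greedy L H := by
  induction L generalizing H with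
  | nil => exact subset_rfl
  | cons e L ih =>
    by_cases hc : hasCycle (insert e H)
    · exact (greedy_cons_of_hasCycle hc).symm ▸ ih H
    · exact (greedy_cons_of_not_hasCycle hc).symm ▸ (Set.subset_insert e H).trans (ih _)

open Classical in
theorem greedy_filter_inter_prod (V' : Set V) (L : List (V × V)) (H : Set (V × V))
    (hH : ¬ hasCycle H) (hdown : ∀ a b : V, b ∈ V' → (a, b) ∈ greedy L H → a ∈ V') :
    greedy (L.filter (· ∈ V' ×ˢ V')) (H ∩ V' ×ˢ V') = greedy L H ∩ V' ×ˢ V' := by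
  induction L generalizing H with
  | nil => rfl
  | cons e L ih =>
    have hdownH : ∀ a b : V, b ∈ V' → (a, b) ∈ H → a ∈ V' :=
      fun a b hb hab => hdown a b hb (subset_greedy _ _ hab)
    by_cases hc : hasCycle (insert e H)
    · rw [greedy_cons_of_hasCycle hc] at hdown ⊢
      by_cases he : e ∈ V' ×ˢ V'
      · rw [List.filter_cons_of_pos (by simpa using he), greedy_cons_of_hasCycle
          ((hasCycle_insert_inter_prod_iff he hH hdownH).2 hc)]
        exact ih H hH hdown
      · rw [List.filter_cons_of_neg (by simpa using he)]
        exact ih H hH hdown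
    · rw [greedy_cons_of_not_hasCycle hc] at hdown ⊢
      by_cases he : e ∈ V' ×ˢ V'
      · rw [List.filter_cons_of_pos (by simpa using he), greedy_cons_of_not_hasCycle
          (mt (hasCycle_insert_inter_prod_iff he hH hdownH).1 hc), ← Set.insert_inter_of_mem he]
        exact ih _ hc hdown
      · rw [List.filter_cons_of_neg (by simpa using he), ← Set.insert_inter_of_notMem he]
        exact ih _ hc hdown

end RankedPairs

theorem rankedPairs_respects_initial_segments_general {V : Type*}
    (L : List (V × V))
    (hnd : L.Nodup)
    (V' : Set V)
    (hdown : ∀ a b : V, b ∈ V' → (a, b) ∈ greedy L ∅ → a ∈ V')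
    (L' : List (V × V))
    (hsub : L'.Sublist L)
    (hmemL' : ∀ e : V × V, e ∈ L' ↔ e ∈ L ∧ e.1 ∈ V' ∧ e.2 ∈ V') :
    ∀ a b : V, a ∈ V' → b ∈ V' →
      ((a, b) ∈ greedy L' ∅ ↔ (a, b) ∈ greedy L ∅) := by
  classical
  intro a b ha hb
  have hL' : L' = L.filter (· ∈ V' ×ˢ V') :=
    hsub.eq_filter_of_mem_iff hnd fun e => by simpa [Set.mem_prod] using hmemL' e
  have hrestrict := greedy_filter_inter_prod V' L ∅ not_hasCycle_empty hdown
  rw [Set.empty_inter, ← hL'] at hrestrict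
  simp [hrestrict, ha, hb]

/-- Ranked Pairs respects initial segments: if `V'` is downward closed under the
Ranked Pairs output order (i.e. is the set of transactions of an initial segment of
the output), and Ranked Pairs is rerun on the votes restricted to `V'` (the edge
list `L'` is the sublist of `L` of edges inside `V'`, which keeps the induced
tie-breaking order; note the restricted votes induce the same pairwise weights),
then on pairs inside `V'` the restricted output agrees with the original output,
i.e. the original output extends the output on the restricted input. -/
theorem rankedPairs_respects_initial_segments {V : Type*} [Fintype V]
    {n : ℕ} (hn : 0 < n)
    (rank : Fin n → V → ℕ) (hinj : ∀ i, Function.Injective (rank i))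
    (L : List (V × V))
    (hmemL : ∀ a b : V, a ≠ b → (a, b) ∈ L)
    (hnd : L.Nodup)
    (hirr : ∀ e ∈ L, e.1 ≠ e.2)
    (hsort : L.Pairwise (fun e f => voteWeight n rank f.1 f.2 ≤ voteWeight n rank e.1 e.2))
    (V' : Set V)
    (hdown : ∀ a b : V, b ∈ V' → (a, b) ∈ greedy L ∅ → a ∈ V')
    (L' : List (V × V))
    (hsub : L'.Sublist L)
    (hmemL' : ∀ e : V × V, e ∈ L' ↔ e ∈ L ∧ e.1 ∈ V' ∧ e.2 ∈ V') :
    ∀ a b : V, a ∈ V' → b ∈ V' →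
      ((a, b) ∈ greedy L' ∅ ↔ (a, b) ∈ greedy L ∅) :=
  rankedPairs_respects_initial_segments_general L hnd V' hdown L' hsub hmemL'
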